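/- arXiv:1805.07755 — 3 statements merged into one kernel-verified Lean document; each statement's English description precedes it below -/
import Mathlib

section
/- Let R be a reduced root system in ℝ^N with positive subsystem R₊, and suppose all multiplicities equal 1, so that w_β(x) = ∏_{α∈R₊} |α·x|^β for β > 0. Then for every x in the complement of the union of the hyperplanes {α·x = 0}, the Euclidean Laplacian of w_β satisfies Δ w_β(x) = β(β−1) w_β(x) · ∑_{α∈R₊} ‖α‖²/(α·x)². -/
/-!
Away from the hyperplanes `w_β` is smooth with `∇w_β = β w_β G`, `G(x) = ∑_{α∈R₊} α/(α·x)`, and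
`∂_u ⟪G, u⟫ = -∑ (α·u)²/(α·x)²`; summing second derivatives over an orthonormal basis gives
`Δw_β = β w_β (β‖G‖² - ∑ ‖α‖²/(α·x)²)`. It remains to see that the cross terms
`∑_{α≠ξ} ⟪α,ξ⟫/((α·x)(ξ·x))` of `‖G‖²` vanish. Partial fractions along a generic line
`x + t v` reduce this to the "residue" identities `∑_{ξ≠η} ⟪η,ξ⟫/(ξ·y) = 0` for `y ⊥ η`, which
hold because `ξ ↦ ±σ_η ξ` is an involution of `R₊ \ {η}` changing the sign of each term.
-/

open RealInnerProductSpace Finset Filter Topology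

variable {E : Type*} [NormedAddCommGroup E] [InnerProductSpace ℝ E]

theorem Submodule.reflection_orthogonalComplement_singleton_apply (α ξ : E) :
    (ℝ ∙ α)ᗮ.reflection ξ = ξ - (2 * ⟪α, ξ⟫ / ‖α‖ ^ 2) • α := by
  rw [Submodule.reflection_orthogonal_apply, Submodule.reflection_singleton_apply]
  simp only [RCLike.ofReal_real_eq_id, id]
  module

theorem exists_forall_inner_ne_zero {ι : Type*} [Finite ι] (v : ι → E) (hv : ∀ i, v i ≠ 0) :
    ∃ x, ∀ i, ⟪v i, x⟫ ≠ 0 :=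
  Module.Dual.exists_forall_ne_zero_of_forall_exists (fun i => innerₛₗ ℝ (v i))
    fun i => ⟨v i, by simpa using hv i⟩

theorem sum_erase_inner_div_inner_eq_zero [DecidableEq E] {P : Finset E} {η y : E}
    (hη : η ∈ P) (hneg : ∀ α ∈ P, -α ∉ P)
    (hrefl : ∀ ξ ∈ P, (ℝ ∙ η)ᗮ.reflection ξ ∈ P ∨ -(ℝ ∙ η)ᗮ.reflection ξ ∈ P)
    (hy : ⟪η, y⟫ = 0) :
    ∑ ξ ∈ P.erase η, ⟪η, ξ⟫ / ⟪ξ, y⟫ = 0 := by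
  set σ := (ℝ ∙ η)ᗮ.reflection
  have hσσ : ∀ ξ, σ (σ ξ) = ξ := Submodule.reflection_reflection _
  have hση : σ η = -η := Submodule.reflection_orthogonalComplement_singleton_eq_neg η
  have hσy : σ y = y := Submodule.reflection_mem_subspace_eq_self
    ((Submodule.mem_orthogonal_singleton_iff_inner_right).mpr hy)
  set g : E → ℝ := fun ξ => ⟪η, ξ⟫ / ⟪ξ, y⟫
  have hg_neg : ∀ ξ, g (-ξ) = g ξ := fun ξ => by
    simp only [g, inner_neg_left, inner_neg_right, neg_div_neg_eq]
  have hg_σ : ∀ ξ, g (σ ξ) = -g ξ := fun ξ => by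
    have hnum : ⟪η, σ ξ⟫ = -⟪η, ξ⟫ := by
      rw [← σ.inner_map_map η, hση, hσσ, inner_neg_left]
    have hden : ⟪σ ξ, y⟫ = ⟪ξ, y⟫ := by
      rw [← σ.inner_map_map, hσσ, hσy]
    simp only [g, hnum, hden, neg_div]
  let π : E → E := fun ξ => if σ ξ ∈ P then σ ξ else -σ ξ
  have hπ_mem : ∀ ξ ∈ P, π ξ ∈ P := fun ξ hξ => by
    unfold π; split_ifs with h
    exacts [h, (hrefl ξ hξ).resolve_left h]
  have hσπ : ∀ ξ, σ (π ξ) = ξ ∨ σ (π ξ) = -ξ := fun ξ => by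
    unfold π; split_ifs
    exacts [.inl (hσσ ξ), .inr (by rw [map_neg, hσσ])]
  have hππ : ∀ ξ ∈ P, π (π ξ) = ξ := fun ξ hξ => by
    rcases hσπ ξ with h | h <;> simp [π, h, hξ, hneg ξ hξ]
  have hπ_ne : ∀ ξ ∈ P, ξ ≠ η → π ξ ≠ η := fun ξ hξ hξη hπη => by
    rcases hσπ ξ with h | h <;> rw [hπη, hση] at h
    · exact hneg η hη (h ▸ hξ)
    · exact hξη (neg_inj.mp h).symm
  have hg_π : ∀ ξ, g (π ξ) = -g ξ := fun ξ => by
    unfold π; split_ifs <;> simp only [hg_neg, hg_σ]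
  refine sum_involution (fun ξ _ => π ξ) (fun ξ _ => by simp [g, hg_π]) (fun ξ _ hgξ hπξ => ?_)
    (fun ξ hξ => mem_erase.mpr ⟨hπ_ne ξ (mem_of_mem_erase hξ) (ne_of_mem_erase hξ),
      hπ_mem ξ (mem_of_mem_erase hξ)⟩) (fun ξ hξ => hππ ξ (mem_of_mem_erase hξ))
  have := hg_π ξ
  rw [hπξ] at this
  exact hgξ (by linarith)

theorem sum_sum_erase_inner_div_eq_zero [DecidableEq E] {P : Finset E} {x v : E}
    (hx : ∀ α ∈ P, ⟪α, x⟫ ≠ 0)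
    (hv : ∀ α ∈ P, ∀ ξ ∈ P, α ≠ ξ → ⟪α, v⟫ * ⟪ξ, x⟫ ≠ ⟪α, x⟫ * ⟪ξ, v⟫)
    (hres : ∀ η ∈ P, ∀ y, ⟪η, y⟫ = 0 → ∑ ξ ∈ P.erase η, ⟪η, ξ⟫ / ⟪ξ, y⟫ = 0) :
    ∑ α ∈ P, ∑ ξ ∈ P.erase α, ⟪α, ξ⟫ / (⟪α, x⟫ * ⟪ξ, x⟫) = 0 := by
  -- `y α` is a multiple of the point where the line `x + t v` meets `α⊥`
  set y : E → E := fun α => ⟪α, v⟫ • x - ⟪α, x⟫ • v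
  have hy : ∀ α, ⟪α, y α⟫ = 0 := fun α => by
    simp only [y, inner_sub_right, real_inner_smul_right]; ring
  set f : E → E → ℝ := fun α ξ => ⟪α, v⟫ / ⟪α, x⟫ * (⟪α, ξ⟫ / ⟪ξ, y α⟫)
  -- partial fractions along that line
  have hsplit : ∀ α ∈ P, ∀ ξ ∈ P.erase α, ⟪α, ξ⟫ / (⟪α, x⟫ * ⟪ξ, x⟫) = f α ξ + f ξ α := by
    intro α hα ξ hξ
    obtain ⟨hξα, hξ⟩ := mem_erase.mp hξ
    have hD : ⟪ξ, x⟫ * ⟪α, v⟫ - ⟪α, x⟫ * ⟪ξ, v⟫ ≠ 0 := by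
      rw [mul_comm]; exact sub_ne_zero.mpr (hv α hα ξ hξ hξα.symm)
    have hD' : ⟪α, x⟫ * ⟪ξ, v⟫ - ⟪ξ, x⟫ * ⟪α, v⟫ ≠ 0 := by rwa [← neg_sub, neg_ne_zero]
    have hαx := hx α hα
    have hξx := hx ξ hξ
    simp only [f, y, inner_sub_right, real_inner_smul_right, real_inner_comm ξ α]
    field_simp
    ring
  have hf : ∀ α ∈ P, ∑ ξ ∈ P.erase α, f α ξ = 0 := fun α hα => by
    rw [← mul_sum, hres α hα (y α) (hy α), mul_zero]
  rw [sum_congr rfl fun α hα => sum_congr rfl (hsplit α hα)]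
  simp only [sum_add_distrib]
  have hswap : ∑ α ∈ P, ∑ ξ ∈ P.erase α, f ξ α = ∑ α ∈ P, ∑ ξ ∈ P.erase α, f α ξ :=
    sum_comm' (by aesop)
  rw [hswap, sum_eq_zero hf, add_zero]

noncomputable def positiveRoots (R : Finset E) (m : E) : Finset E := R.filter (fun α => 0 < ⟪m, α⟫)

section positiveRoots

variable {R : Finset E} {m α : E}

theorem positiveRoots_subset : positiveRoots R m ⊆ R := filter_subset _ _

theorem neg_notMem_positiveRoots (hα : α ∈ positiveRoots R m) : -α ∉ positiveRoots R m := by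
  simp only [positiveRoots, mem_filter, inner_neg_right, Left.neg_pos_iff] at hα ⊢
  exact fun h => (lt_asymm hα.2 h.2).elim

theorem mem_or_neg_mem_positiveRoots (hR : ∀ α ∈ R, ∀ ξ ∈ R, (ℝ ∙ α)ᗮ.reflection ξ ∈ R)
    (hm : ∀ α ∈ R, ⟪m, α⟫ ≠ 0) (hα : α ∈ R) :
    α ∈ positiveRoots R m ∨ -α ∈ positiveRoots R m := by
  have hnegα : -α ∈ R := by
    simpa [Submodule.reflection_orthogonalComplement_singleton_eq_neg] using hR α hα α hα
  simp only [positiveRoots, mem_filter, inner_neg_right, Left.neg_pos_iff, hα, hnegα, true_and]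
  exact (hm α hα).lt_or_gt.symm

theorem eq_one_of_smul_mem_positiveRoots (hred : ∀ α ∈ R, ∀ c : ℝ, c • α ∈ R → c = 1 ∨ c = -1)
    {c : ℝ} (hα : α ∈ positiveRoots R m) (hcα : c • α ∈ positiveRoots R m) : c = 1 := by
  refine (hred α (positiveRoots_subset hα) c (positiveRoots_subset hcα)).resolve_right ?_
  rintro rfl
  exact neg_notMem_positiveRoots hα (by simpa using hcα)

theorem positiveRoots_sum_erase_inner_div_inner_eq_zero [DecidableEq E]
    (hR : ∀ α ∈ R, ∀ ξ ∈ R, (ℝ ∙ α)ᗮ.reflection ξ ∈ R) (hm : ∀ α ∈ R, ⟪m, α⟫ ≠ 0)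
    {η y : E} (hη : η ∈ positiveRoots R m) (hy : ⟪η, y⟫ = 0) :
    ∑ ξ ∈ (positiveRoots R m).erase η, ⟪η, ξ⟫ / ⟪ξ, y⟫ = 0 :=
  sum_erase_inner_div_inner_eq_zero hη (fun _ => neg_notMem_positiveRoots)
    (fun ξ hξ => mem_or_neg_mem_positiveRoots hR hm
      (hR η (positiveRoots_subset hη) ξ (positiveRoots_subset hξ))) hy

theorem positiveRoots_sum_sum_erase_inner_div_eq_zero [DecidableEq E]
    (hR : ∀ α ∈ R, ∀ ξ ∈ R, (ℝ ∙ α)ᗮ.reflection ξ ∈ R)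
    (hred : ∀ α ∈ R, ∀ c : ℝ, c • α ∈ R → c = 1 ∨ c = -1) (hm : ∀ α ∈ R, ⟪m, α⟫ ≠ 0)
    {x : E} (hx : ∀ α ∈ positiveRoots R m, ⟪α, x⟫ ≠ 0) :
    ∑ α ∈ positiveRoots R m, ∑ ξ ∈ (positiveRoots R m).erase α,
      ⟪α, ξ⟫ / (⟪α, x⟫ * ⟪ξ, x⟫) = 0 := by
  set P := positiveRoots R m
  -- distinct positive roots are not proportional, so these vectors are nonzero
  have hne : ∀ p : P.offDiag, ⟪p.1.2, x⟫ • p.1.1 - ⟪p.1.1, x⟫ • p.1.2 ≠ 0 := by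
    rintro ⟨⟨α, ξ⟩, hp⟩ h
    obtain ⟨hα, hξ, hαξ⟩ := mem_offDiag.mp hp
    have hξα : ξ = (⟪ξ, x⟫ / ⟪α, x⟫) • α := by
      rw [div_eq_inv_mul, mul_smul, sub_eq_zero.mp h, smul_smul, inv_mul_cancel₀ (hx α hα),
        one_smul]
    have hc : ⟪ξ, x⟫ / ⟪α, x⟫ = 1 :=
      eq_one_of_smul_mem_positiveRoots hred hα (by rwa [hξα] at hξ)
    exact hαξ (by rw [hξα, hc, one_smul])
  obtain ⟨v, hv⟩ := exists_forall_inner_ne_zero _ hne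
  refine sum_sum_erase_inner_div_eq_zero (v := v) hx (fun α hα ξ hξ hαξ h => ?_)
    (fun η hη y hy => positiveRoots_sum_erase_inner_div_inner_eq_zero hR hm hη hy)
  refine hv ⟨(α, ξ), mem_offDiag.mpr ⟨hα, hξ, hαξ⟩⟩ ?_
  simp only [inner_sub_left, real_inner_smul_left]
  linarith

end positiveRoots

theorem Real.hasDerivAt_abs_rpow_of_ne_zero {t : ℝ} (ht : t ≠ 0) (β : ℝ) :
    HasDerivAt (fun s => |s| ^ β) (β * |t| ^ β / t) t := by
  convert (hasDerivAt_abs ht).rpow_const (p := β) (Or.inl (abs_ne_zero.mpr ht)) using 1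
  rw [Real.rpow_sub_one (abs_ne_zero.mpr ht)]
  rcases ht.lt_or_gt with h | h <;> simp [abs_of_neg, abs_of_pos, h] <;> field_simp

section weight

variable {S : Finset E} {x : E} (β : ℝ)

theorem hasFDerivAt_prod_abs_inner_rpow (hx : ∀ α ∈ S, ⟪α, x⟫ ≠ 0) :
    HasFDerivAt (fun y => ∏ α ∈ S, |⟪α, y⟫| ^ β)
      ((β * ∏ α ∈ S, |⟪α, x⟫| ^ β) • ∑ α ∈ S, ⟪α, x⟫⁻¹ • innerSL ℝ α) x := by
  classical
  refine (HasFDerivAt.finsetProd fun α hα => (Real.hasDerivAt_abs_rpow_of_ne_zero (hx α hα) β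
    |>.comp_hasFDerivAt x (innerSL ℝ α).hasFDerivAt)).congr_fderiv ?_
  rw [smul_sum]
  refine sum_congr rfl fun α hα => ?_
  rw [smul_smul, smul_smul, ← mul_prod_erase S _ hα]
  simp only [Function.comp_apply]
  field_simp

theorem fderiv_prod_abs_inner_rpow_apply_eventuallyEq (hx : ∀ α ∈ S, ⟪α, x⟫ ≠ 0) (u : E) :
    (fun y => fderiv ℝ (fun z => ∏ α ∈ S, |⟪α, z⟫| ^ β) y u) =ᶠ[𝓝 x]
      fun y => β * (∏ α ∈ S, |⟪α, y⟫| ^ β) * ∑ α ∈ S, ⟪α, u⟫ * ⟪α, y⟫⁻¹ := by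
  have hnear : ∀ᶠ y in 𝓝 x, ∀ α ∈ S, ⟪α, y⟫ ≠ 0 := (eventually_all_finset S).mpr
    fun α hα => (continuous_const.inner continuous_id).continuousAt.eventually_ne (hx α hα)
  filter_upwards [hnear] with y hy
  rw [(hasFDerivAt_prod_abs_inner_rpow β hy).fderiv]
  simp [mul_sum, mul_comm]

theorem fderiv_fderiv_prod_abs_inner_rpow_apply (hx : ∀ α ∈ S, ⟪α, x⟫ ≠ 0) (u : E) :
    fderiv ℝ (fun y => fderiv ℝ (fun z => ∏ α ∈ S, |⟪α, z⟫| ^ β) y u) x u =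
      β * (∏ α ∈ S, |⟪α, x⟫| ^ β) *
        (β * (∑ α ∈ S, ⟪α, u⟫ * ⟪α, x⟫⁻¹) ^ 2 - ∑ α ∈ S, (⟪α, u⟫ * ⟪α, x⟫⁻¹) ^ 2) := by
  have hsum : HasFDerivAt (fun y => ∑ α ∈ S, ⟪α, u⟫ * ⟪α, y⟫⁻¹)
      (∑ α ∈ S, ⟪α, u⟫ • (-(⟪α, x⟫ ^ 2)⁻¹) • innerSL ℝ α) x :=
    HasFDerivAt.fun_sum fun α hα =>
      ((hasDerivAt_inv (hx α hα)).comp_hasFDerivAt x (innerSL ℝ α).hasFDerivAt).const_mul _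
  rw [(fderiv_prod_abs_inner_rpow_apply_eventuallyEq β hx u).fderiv_eq,
    (((hasFDerivAt_prod_abs_inner_rpow β hx).const_mul β).fun_mul hsum).fderiv]
  have hd : (∑ α ∈ S, ⟪α, u⟫ • (-(⟪α, x⟫ ^ 2)⁻¹) • innerSL ℝ α) u =
      -∑ α ∈ S, (⟪α, u⟫ * ⟪α, x⟫⁻¹) ^ 2 := by
    simp only [FunLike.coe_sum, Finset.sum_apply, ← sum_neg_distrib]
    refine sum_congr rfl fun α _ => ?_
    simp only [smul_apply, innerSL_apply_apply, smul_eq_mul]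
    ring
  have hc : (∑ α ∈ S, ⟪α, x⟫⁻¹ • innerSL ℝ α) u = ∑ α ∈ S, ⟪α, u⟫ * ⟪α, x⟫⁻¹ := by
    simp [mul_comm]
  simp only [add_apply, smul_apply, smul_eq_mul, hd, hc]
  ring

theorem sum_fderiv_fderiv_prod_abs_inner_rpow {ι : Type*} [Fintype ι]
    (b : OrthonormalBasis ι ℝ E) (hx : ∀ α ∈ S, ⟪α, x⟫ ≠ 0) :
    ∑ i, fderiv ℝ (fun y => fderiv ℝ (fun z => ∏ α ∈ S, |⟪α, z⟫| ^ β) y (b i)) x (b i) =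
      β * (∏ α ∈ S, |⟪α, x⟫| ^ β) *
        (β * ‖∑ α ∈ S, ⟪α, x⟫⁻¹ • α‖ ^ 2 - ∑ α ∈ S, ‖α‖ ^ 2 / ⟪α, x⟫ ^ 2) := by
  have hparseval : ∀ z, ∑ i, ⟪z, b i⟫ ^ 2 = ‖z‖ ^ 2 := fun z => by
    simpa [sq, real_inner_comm z] using b.sum_inner_mul_inner z z
  have hlin : ∀ u, ∑ α ∈ S, ⟪α, u⟫ * ⟪α, x⟫⁻¹ = ⟪∑ α ∈ S, ⟪α, x⟫⁻¹ • α, u⟫ := fun u => by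
    simp [sum_inner, real_inner_smul_left, mul_comm]
  simp only [fderiv_fderiv_prod_abs_inner_rpow_apply β hx, ← mul_sum, sum_sub_distrib, hlin,
    hparseval, mul_pow]
  rw [sum_comm]
  simp only [← sum_mul, hparseval, inv_pow, div_eq_mul_inv]

end weight

theorem norm_sq_sum_inv_inner_smul [DecidableEq E] (S : Finset E) (x : E) :
    ‖∑ α ∈ S, ⟪α, x⟫⁻¹ • α‖ ^ 2 =
      ∑ α ∈ S, ‖α‖ ^ 2 / ⟪α, x⟫ ^ 2 + ∑ α ∈ S, ∑ ξ ∈ S.erase α, ⟪α, ξ⟫ / (⟪α, x⟫ * ⟪ξ, x⟫) := by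
  rw [← real_inner_self_eq_norm_sq, sum_inner, ← sum_add_distrib]
  refine sum_congr rfl fun α hα => ?_
  rw [inner_sum, ← add_sum_erase _ _ hα]
  simp only [real_inner_smul_left, real_inner_smul_right]
  rw [real_inner_self_eq_norm_sq]
  congr 1
  · field_simp
  · refine sum_congr rfl fun ξ _ => ?_
    field_simp

theorem dunkl_weight_laplacian_general
    (N : ℕ) (R Rplus : Finset (EuclideanSpace ℝ (Fin N)))
    (m : EuclideanSpace ℝ (Fin N))
    (hRinv : ∀ α ∈ R, ∀ ξ ∈ R, (ξ - (2 * ⟪α, ξ⟫ / ‖α‖ ^ 2) • α) ∈ R)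
    (hRred : ∀ α ∈ R, ∀ c : ℝ, c • α ∈ R → c = 1 ∨ c = -1)
    (hm : ∀ α ∈ R, ⟪m, α⟫ ≠ 0)
    (hRplus : Rplus = R.filter (fun α => 0 < ⟪m, α⟫))
    (β : ℝ)
    (w : EuclideanSpace ℝ (Fin N) → ℝ)
    (hw : ∀ x, w x = ∏ α ∈ Rplus, |⟪α, x⟫| ^ β)
    (x : EuclideanSpace ℝ (Fin N))
    (hx : ∀ α ∈ R, ⟪α, x⟫ ≠ 0) :
    ∑ i : Fin N,
        fderiv ℝ (fun y => fderiv ℝ w y (EuclideanSpace.single i 1)) x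
          (EuclideanSpace.single i 1)
      = β * (β - 1) * w x * ∑ α ∈ Rplus, ‖α‖ ^ 2 / ⟪α, x⟫ ^ 2 := by
  classical
  obtain rfl : Rplus = positiveRoots R m := hRplus
  obtain rfl : w = fun y => ∏ α ∈ positiveRoots R m, |⟪α, y⟫| ^ β := funext hw
  have hR : ∀ α ∈ R, ∀ ξ ∈ R, (ℝ ∙ α)ᗮ.reflection ξ ∈ R := by
    simpa only [Submodule.reflection_orthogonalComplement_singleton_apply] using hRinv
  have hxP : ∀ α ∈ positiveRoots R m, ⟪α, x⟫ ≠ 0 := fun α hα => hx α (positiveRoots_subset hα)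
  have hΔ := sum_fderiv_fderiv_prod_abs_inner_rpow β (EuclideanSpace.basisFun (Fin N) ℝ) hxP
  simp only [EuclideanSpace.basisFun_apply] at hΔ
  rw [hΔ, norm_sq_sum_inv_inner_smul, positiveRoots_sum_sum_erase_inner_div_eq_zero hR hRred hm hxP]
  ring

/-- Laplacian identity for the Dunkl weight with all multiplicities one:
`Δ w_β(x) = β(β−1) w_β(x) ∑_{α∈R₊} ‖α‖²/(α·x)²` away from the reflecting hyperplanes. -/
theorem dunkl_weight_laplacian
    (N : ℕ) (R Rplus : Finset (EuclideanSpace ℝ (Fin N)))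
    (m : EuclideanSpace ℝ (Fin N))
    (hR0 : (0 : EuclideanSpace ℝ (Fin N)) ∉ R)
    (hRinv : ∀ α ∈ R, ∀ ξ ∈ R, (ξ - (2 * ⟪α, ξ⟫ / ‖α‖ ^ 2) • α) ∈ R)
    (hRred : ∀ α ∈ R, ∀ c : ℝ, c • α ∈ R → c = 1 ∨ c = -1)
    (hm : ∀ α ∈ R, ⟪m, α⟫ ≠ 0)
    (hRplus : Rplus = R.filter (fun α => 0 < ⟪m, α⟫))
    (β : ℝ) (hβ : 0 < β)
    (w : EuclideanSpace ℝ (Fin N) → ℝ)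
    (hw : ∀ x, w x = ∏ α ∈ Rplus, |⟪α, x⟫| ^ β)
    (x : EuclideanSpace ℝ (Fin N))
    (hx : ∀ α ∈ R, ⟪α, x⟫ ≠ 0) :
    ∑ i : Fin N,
        fderiv ℝ (fun y => fderiv ℝ w y (EuclideanSpace.single i 1)) x
          (EuclideanSpace.single i 1)
      = β * (β - 1) * w x * ∑ α ∈ Rplus, ‖α‖ ^ 2 / ⟪α, x⟫ ^ 2 :=
  dunkl_weight_laplacian_general N R Rplus m hRinv hRred hm hRplus β w hw x hx
end

section
/- Let W be a finite reflection group with positive roots R₊, λ(α) > 0 for α ∈ R₊, Λ = ∑_{α∈R₊} λ(α), and M_{τν} = ∑_{α∈R₊} λ(α)δ_{τσ_α,ν} − Λ δ_{τν}. Then the function φ_min(τ) = sign(τ)/√|W| is an eigenvector of M with eigenvalue −2Λ, and −2Λ is the minimum eigenvalue of M. In particular, when the rates λ(α) = β‖α‖²k(α)/(4(α·z)²) sum to Λ = β|R₊|/(4(β−1)) (equal multiplicities, β>1), the most negative relaxation exponent is −β|R₊|/(2(β−1)). -/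
open Finset

/-- `φ_min(τ) = sign(τ)/√|W|` is an eigenvector of the master-equation matrix `M`
with eigenvalue `−2Λ`, and `−2Λ` is the minimum eigenvalue; with
`Λ = β|R₊|/(4(β−1))` this gives the most negative relaxation exponent
`−β|R₊|/(2(β−1))`. -/
theorem master_operator_min_eigenvalue
    (W : Type*) [Fintype W] [Group W] (ι : Type*) [Fintype ι]
    (σ : ι → W) (hσ : ∀ a, σ a * σ a = 1)
    (lam : ι → ℝ) (hlam : ∀ a, 0 < lam a)
    (sgn : W → ℝ) (hsgnval : ∀ τ, sgn τ = 1 ∨ sgn τ = -1)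
    (hsgn : ∀ (τ : W) (a : ι), sgn (τ * σ a) = -sgn τ)
    (Λ : ℝ) (hΛ : Λ = ∑ a : ι, lam a) :
    (∀ τ : W,
        (∑ a : ι, lam a * (sgn (τ * σ a) / Real.sqrt (Fintype.card W)))
            - Λ * (sgn τ / Real.sqrt (Fintype.card W))
          = (-2 * Λ) * (sgn τ / Real.sqrt (Fintype.card W)))
      ∧ (∀ (r : ℝ) (φ : W → ℝ), φ ≠ 0 →
          (∀ τ : W, (∑ a : ι, lam a * φ (τ * σ a)) - Λ * φ τ = r * φ τ) → -2 * Λ ≤ r)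
      ∧ (∀ β : ℝ, 1 < β → Λ = β * (Fintype.card ι) / (4 * (β - 1)) →
          -2 * Λ = -(β * (Fintype.card ι)) / (2 * (β - 1))) := by

  have hΛ0 : 0 ≤ Λ := hΛ ▸ Finset.sum_nonneg (fun a _ => (hlam a).le)
  refine ⟨fun τ => ?_, fun r φ hφ heig => ?_, fun β hβ h => ?_⟩
  · simp only [hsgn]
    rw [← Finset.sum_mul, ← hΛ]
    ring
  · obtain ⟨τ, hτ⟩ := Finite.exists_max (fun τ => |φ τ|)
    have hpos : 0 < |φ τ| := by
      obtain ⟨ν, hν⟩ : ∃ ν, φ ν ≠ 0 := by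
        by_contra h; push_neg at h; exact hφ (funext h)
      exact lt_of_lt_of_le (abs_pos.mpr hν) (hτ ν)
    have key : |r + Λ| * |φ τ| ≤ Λ * |φ τ| := by
      have heq : (r + Λ) * φ τ = ∑ a : ι, lam a * φ (τ * σ a) := by
        have := heig τ; linarith [this]
      calc |r + Λ| * |φ τ| = |∑ a : ι, lam a * φ (τ * σ a)| := by
            rw [← abs_mul, heq]
        _ ≤ ∑ a : ι, |lam a * φ (τ * σ a)| := Finset.abs_sum_le_sum_abs _ _
        _ ≤ ∑ a : ι, lam a * |φ τ| := by
            apply Finset.sum_le_sum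
            intro a _
            rw [abs_mul, abs_of_pos (hlam a)]
            exact mul_le_mul_of_nonneg_left (hτ (τ * σ a)) (hlam a).le
        _ = Λ * |φ τ| := by rw [← Finset.sum_mul, hΛ]
    have h2 : |r + Λ| ≤ Λ := le_of_mul_le_mul_right key hpos
    have := neg_abs_le (r + Λ)
    linarith
  · have hb : β - 1 ≠ 0 := by linarith
    rw [h]; field_simp; ring
end

section
/- Let z₁ < z₂ < ⋯ < z_N be the zeros of the N-th Hermite polynomial H_N. Then for each i, z_i = ∑_{k≠i} 2/(z_i − z_k)³. -/
/-!
Write `H = c (X - z_i) G` with `G = ∏_{k ≠ i} (X - z_k)`. At `y = z_i` the derivatives of `G` are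
`G(y)` times polynomials in the power sums `S_j = ∑_{k ≠ i} (y - z_k)⁻ʲ`, and `H^{(n+1)}(y)` is
`(n+1) c G^{(n)}(y)`. Evaluating the Hermite equation and its first two derivatives at `y` therefore
gives, in turn, `S_1 = y`, `3 S_2 = 2N - 2 - y²` and `2 S_3 = y`; the degree `N` cancels in the
last step, so the identity holds for any parameter of the equation.
-/

open Finset Polynomial

section HermiteOperator

variable {R : Type*} [CommRing R]

noncomputable def hermiteOperator (ν : R) (P : R[X]) : R[X] :=
  derivative (derivative P) - C 2 * X * derivative P + C (2 * ν) * P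

theorem derivative_hermiteOperator (ν : R) (P : R[X]) :
    derivative (hermiteOperator ν P) = hermiteOperator (ν - 1) (derivative P) := by
  simp only [hermiteOperator, derivative_add, derivative_sub, derivative_mul, derivative_C,
    derivative_X, zero_mul, zero_add, mul_one, C_mul, C_sub, C_1]
  ring

theorem hermiteOperator_C_mul (ν c : R) (P : R[X]) :
    hermiteOperator ν (C c * P) = C c * hermiteOperator ν P := by
  simp only [hermiteOperator, derivative_C_mul]
  ring

@[simp]
theorem eval_hermiteOperator (ν x : R) (P : R[X]) :
    eval x (hermiteOperator ν P) =
      eval x (derivative (derivative P)) - 2 * x * eval x (derivative P) + 2 * ν * eval x P := by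
  simp [hermiteOperator]

end HermiteOperator

section ProdXSubC

variable {K ι : Type*} [Field K] (s : Finset ι) (z : ι → K) {y : K}

theorem eval_prod_X_sub_C : eval y (∏ k ∈ s, (X - C (z k))) = ∏ k ∈ s, (y - z k) := by
  simp [eval_prod]

theorem eval_derivative_prod_X_sub_C (h : ∀ k ∈ s, y ≠ z k) :
    eval y (derivative (∏ k ∈ s, (X - C (z k)))) =
      (∏ k ∈ s, (y - z k)) * ∑ k ∈ s, (y - z k)⁻¹ := by
  induction s using Finset.cons_induction with
  | empty => simp
  | cons a s _ ih =>
    have ha : y - z a ≠ 0 := sub_ne_zero.mpr (h a (mem_cons_self a s))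
    have hs : ∀ k ∈ s, y ≠ z k := fun k hk => h k (mem_cons_of_mem hk)
    simp only [prod_cons, sum_cons, derivative_mul, derivative_sub, derivative_X, derivative_C,
      sub_zero, one_mul, eval_add, eval_mul, eval_sub, eval_X, eval_C, ih hs, eval_prod_X_sub_C]
    field_simp

theorem eval_derivative_derivative_prod_X_sub_C (h : ∀ k ∈ s, y ≠ z k) :
    eval y (derivative (derivative (∏ k ∈ s, (X - C (z k))))) =
      (∏ k ∈ s, (y - z k)) * ((∑ k ∈ s, (y - z k)⁻¹) ^ 2 - ∑ k ∈ s, (y - z k)⁻¹ ^ 2) := by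
  induction s using Finset.cons_induction with
  | empty => simp
  | cons a s _ ih =>
    have ha : y - z a ≠ 0 := sub_ne_zero.mpr (h a (mem_cons_self a s))
    have hs : ∀ k ∈ s, y ≠ z k := fun k hk => h k (mem_cons_of_mem hk)
    simp only [prod_cons, sum_cons, derivative_mul, derivative_add, derivative_sub, derivative_X,
      derivative_C, sub_zero, one_mul, eval_add, eval_mul, eval_sub, eval_X, eval_C, ih hs,
      eval_derivative_prod_X_sub_C s z hs]
    field_simp
    ring

theorem eval_derivative_derivative_derivative_prod_X_sub_C (h : ∀ k ∈ s, y ≠ z k) :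
    eval y (derivative (derivative (derivative (∏ k ∈ s, (X - C (z k)))))) =
      (∏ k ∈ s, (y - z k)) * ((∑ k ∈ s, (y - z k)⁻¹) ^ 3
        - 3 * (∑ k ∈ s, (y - z k)⁻¹) * (∑ k ∈ s, (y - z k)⁻¹ ^ 2)
        + 2 * ∑ k ∈ s, (y - z k)⁻¹ ^ 3) := by
  induction s using Finset.cons_induction with
  | empty => simp
  | cons a s _ ih =>
    have ha : y - z a ≠ 0 := sub_ne_zero.mpr (h a (mem_cons_self a s))
    have hs : ∀ k ∈ s, y ≠ z k := fun k hk => h k (mem_cons_of_mem hk)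
    simp only [prod_cons, sum_cons, derivative_mul, derivative_add, derivative_sub, derivative_X,
      derivative_C, sub_zero, one_mul, eval_add, eval_mul, eval_sub, eval_X, eval_C, ih hs,
      eval_derivative_derivative_prod_X_sub_C s z hs]
    field_simp
    ring

end ProdXSubC

theorem sum_two_div_sub_pow_three_eq_of_hermiteOperator_eq_zero {K ι : Type*} [Field K]
    [CharZero K] (s : Finset ι) (z : ι → K) (y ν : K) (h : ∀ k ∈ s, y ≠ z k)
    (hode : hermiteOperator ν ((X - C y) * ∏ k ∈ s, (X - C (z k))) = 0) :
    ∑ k ∈ s, 2 / (y - z k) ^ 3 = y := by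
  set G := ∏ k ∈ s, (X - C (z k))
  have hode₁ := derivative_hermiteOperator ν ((X - C y) * G)
  rw [hode, derivative_zero, eq_comm] at hode₁
  have hode₂ := derivative_hermiteOperator (ν - 1) (derivative ((X - C y) * G))
  rw [hode₁, derivative_zero, eq_comm] at hode₂
  obtain ⟨o₀, o₁, o₂⟩ : 2 * eval y (derivative G) - 2 * y * eval y G = 0 ∧
      3 * eval y (derivative (derivative G)) - 4 * y * eval y (derivative G)
        + 2 * (ν - 1) * eval y G = 0 ∧
      4 * eval y (derivative (derivative (derivative G)))
        - 6 * y * eval y (derivative (derivative G)) + 4 * (ν - 2) * eval y (derivative G) = 0 := by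
    apply_fun eval y at hode hode₁ hode₂
    simp only [eval_hermiteOperator, derivative_mul, derivative_add, derivative_sub, derivative_X,
      derivative_C, sub_zero, one_mul, eval_add, eval_mul, eval_sub, eval_X, eval_C, sub_self,
      zero_mul, add_zero, eval_zero] at hode hode₁ hode₂
    exact ⟨by linear_combination hode, by linear_combination hode₁, by linear_combination hode₂⟩
  simp only [G, eval_derivative_derivative_derivative_prod_X_sub_C s z h,
    eval_derivative_derivative_prod_X_sub_C s z h, eval_derivative_prod_X_sub_C s z h,
    eval_prod_X_sub_C] at o₀ o₁ o₂
  set p := ∏ k ∈ s, (y - z k)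
  have hp : p ≠ 0 := prod_ne_zero_iff.mpr fun k hk => sub_ne_zero.mpr (h k hk)
  have hS₁ : ∑ k ∈ s, (y - z k)⁻¹ = y := mul_left_cancel₀ hp (by linear_combination o₀ / 2)
  rw [hS₁] at o₁ o₂
  have hsum : ∑ k ∈ s, 2 / (y - z k) ^ 3 = 2 * ∑ k ∈ s, (y - z k)⁻¹ ^ 3 := by
    simp only [mul_sum, div_eq_mul_inv, inv_pow]
  rw [hsum]
  exact mul_left_cancel₀ hp (by linear_combination (o₂ - 2 * y * o₁) / 4)

/-- For the zeros `z₁ < ⋯ < z_N` of the `N`-th (physicists') Hermite polynomial,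
`z_i = ∑_{k≠i} 2/(z_i − z_k)³`. -/
theorem hermite_zeros_sum_inv_cube
    (N : ℕ) (H : Polynomial ℝ) (cN : ℝ) (hc : cN ≠ 0)
    (z : Fin N → ℝ) (hz : StrictMono z)
    (hfact : H = C cN * ∏ i : Fin N, (X - C (z i)))
    (hode : derivative (derivative H) - C 2 * X * derivative H + C (2 * (N : ℝ)) * H = 0) :
    ∀ i : Fin N, z i = ∑ k ∈ Finset.univ.erase i, 2 / (z i - z k) ^ 3 := by
  intro i
  have hfact_i : H = C cN * ((X - C (z i)) * ∏ k ∈ univ.erase i, (X - C (z k))) := by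
    rw [hfact, mul_prod_erase _ (fun k => X - C (z k)) (mem_univ i)]
  have hode_i :
      hermiteOperator (N : ℝ) ((X - C (z i)) * ∏ k ∈ univ.erase i, (X - C (z k))) = 0 := by
    replace hode : hermiteOperator (N : ℝ) H = 0 := hode
    rwa [hfact_i, hermiteOperator_C_mul, mul_eq_zero, or_iff_right (C_ne_zero.mpr hc)] at hode
  refine (sum_two_div_sub_pow_three_eq_of_hermiteOperator_eq_zero _ z (z i) N ?_ hode_i).symm
  exact fun k hk => hz.injective.ne (ne_of_mem_erase hk).symm
end
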